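/- arXiv:1207.0979 — 3 statements merged into one kernel-verified Lean document; each statement's English description precedes it below -/
import Mathlib

section
/- Let P be a convex quadrilateral in ℝ² with vertices (ℓ₁, y₁), (r₁, y₁), (ℓ₂, y₂), (r₂, y₂) where y₁, y₂ ∈ ℤ, y₂ - y₁ = k ≥ 1, ℓ₁ < r₁, ℓ₂ < r₂. Assume the arithmetic progression data a, d, ε satisfies 0 < ε ≤ d/2, a - ε > 0, a + kd + ε < 1, and: {ℓ₁} = a + ε, {ℓ₂} = a + kd + ε, {r₁} = a - ε, {r₂} = a + kd - ε, and k divides both ⌊ℓ₂⌋ - ⌊ℓ₁⌋ and ⌊r₂⌋ - ⌊r₁⌋. Then there exists M ∈ ℕ such that for all t ∈ [0,1], the number of integer points in P + (-t, 0) equals M + p(t), where p(t) = 0 if |t - (a + id)| < ε for some i ∈ {0,...,k} and p(t) = 1 otherwise. -/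
open Set
open scoped Finset

/-!
The integer points of `P + (-t, 0)` lie on the `k + 1` rows `y = y₁ + j`, `0 ≤ j ≤ k`. Row `j`
meets `P` in the interval `[L j, R j]` interpolated between the bottom and top edges, and the
divisibility hypotheses make `{L j} = a + j d + ε` and `{R j} = a + j d - ε`. An interval whose
endpoints have fractional parts `c + ε` and `c - ε` contains, after a shift by `t ∈ [0, 1]`, exactly
`⌊R⌋ - ⌊L⌋` integers, or one fewer when `|t - c| < ε`. Since `d ≥ 2ε`, at most one row is short,
so `M + 1 = ∑ j, (⌊R j⌋ - ⌊L j⌋)`.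
-/

theorem Set.ncard_eq_sum_ncard_fiber {α β : Type*} {S : Set (α × β)} (T : Finset β)
    (hS : ∀ p ∈ S, p.2 ∈ T) (hfin : ∀ b ∈ T, {a | (a, b) ∈ S}.Finite) :
    S.ncard = ∑ b ∈ T, {a | (a, b) ∈ S}.ncard := by
  have hS_eq : S = ⋃ b ∈ (T : Set β), (·, b) '' {a | (a, b) ∈ S} := by
    ext ⟨a, b⟩
    simp only [mem_iUnion, mem_image, mem_ofPred_eq, Prod.mk.injEq, Finset.mem_coe]
    exact ⟨fun h => ⟨b, hS _ h, a, h, rfl, rfl⟩, by rintro ⟨b, -, a, h, rfl, rfl⟩; exact h⟩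
  have hdisj : (T : Set β).PairwiseDisjoint fun b => (·, b) '' {a | (a, b) ∈ S} := by
    intro b _ b' _ hne
    refine Set.disjoint_left.2 ?_
    rintro _ ⟨a, -, rfl⟩ ⟨a', -, h⟩
    exact hne (congrArg Prod.snd h).symm
  conv_lhs => rw [hS_eq]
  rw [T.finite_toSet.ncard_biUnion (fun b hb => (hfin b hb).image _) hdisj, finsum_mem_coe_finset]
  exact Finset.sum_congr rfl fun b _ => ncard_image_of_injective _ (Prod.mk_left_injective b)

theorem Int.floor_lt_floor_of_le_of_fract_lt {R : Type*} [CommRing R] [LinearOrder R]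
    [FloorRing R] [IsStrictOrderedRing R] {x y : R} (hxy : x ≤ y)
    (h : Int.fract y < Int.fract x) : ⌊x⌋ < ⌊y⌋ := by
  by_contra! hle
  have : (⌊y⌋ : R) ≤ ⌊x⌋ := by exact_mod_cast hle
  linarith [Int.floor_add_fract x, Int.floor_add_fract y]

theorem setOf_int_add_mem_Icc (L R t : ℝ) :
    {n : ℤ | (n : ℝ) + t ∈ Icc L R} = Finset.Icc ⌈L - t⌉ ⌊R - t⌋ := by
  ext n
  simp only [mem_ofPred_eq, Set.mem_Icc, Finset.coe_Icc, Int.ceil_le, Int.le_floor]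
  constructor <;> rintro ⟨h₁, h₂⟩ <;> constructor <;> linarith

theorem ncard_int_add_mem_Icc {L R c ε t : ℝ} (hε : 0 < ε) (hL : Int.fract L = c + ε)
    (hR : Int.fract R = c - ε) (hLR : L ≤ R) (ht : t ∈ Icc (0 : ℝ) 1) :
    ({n : ℤ | (n : ℝ) + t ∈ Icc L R}.ncard : ℤ) = ⌊R⌋ - ⌊L⌋ - if |t - c| < ε then 1 else 0 := by
  obtain ⟨ht0, ht1⟩ := ht
  have hfloor_lt : ⌊L⌋ < ⌊R⌋ := Int.floor_lt_floor_of_le_of_fract_lt hLR (by linarith)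
  have hceil : ⌈L - t⌉ = ⌊L⌋ + if t < c + ε then 1 else 0 := by
    rw [show L - t = (c + ε - t) + ⌊L⌋ by linarith [Int.floor_add_fract L], Int.ceil_add_intCast,
      add_comm]
    congr 1
    rw [Int.ceil_eq_iff]
    split_ifs <;> push_cast <;> constructor <;>
      linarith [Int.fract_lt_one L, Int.fract_nonneg R]
  have hfloor : ⌊R - t⌋ = ⌊R⌋ - if c - ε < t then 1 else 0 := by
    rw [show R - t = (c - ε - t) + ⌊R⌋ by linarith [Int.floor_add_fract R], Int.floor_add_intCast,
      add_comm, sub_eq_add_neg]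
    congr 1
    rw [Int.floor_eq_iff]
    split_ifs <;> push_cast <;> constructor <;>
      linarith [Int.fract_lt_one L, Int.fract_nonneg R]
  rw [setOf_int_add_mem_Icc, ncard_coe_finset, Int.card_Icc, hceil, hfloor]
  by_cases hlt : |t - c| < ε
  · obtain ⟨h₁, h₂⟩ := abs_lt.1 hlt
    rw [if_pos hlt, if_pos (by linarith), if_pos (by linarith)]
    omega
  · rw [if_neg hlt]
    rw [abs_lt, not_and_or, not_lt, not_lt] at hlt
    rcases hlt with h | h
    · rw [if_neg (by linarith), if_pos (by linarith)]
      omega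
    · rw [if_pos (by linarith), if_neg (by linarith)]
      omega

theorem fract_add_div_mul_sub_of_dvd {x y a d : ℝ} {j k : ℕ} (hx : Int.fract x = a)
    (hy : Int.fract y = a + k * d) (hdvd : (k : ℤ) ∣ ⌊y⌋ - ⌊x⌋) (hjk : j ≤ k) (hd : 0 ≤ d) :
    Int.fract (x + j / k * (y - x)) = a + j * d := by
  obtain ⟨m, hm⟩ := hdvd
  rcases Nat.eq_zero_or_pos k with rfl | hk
  · obtain rfl : j = 0 := Nat.le_zero.1 hjk
    simpa using hx
  have hyx : y - x = k * (m + d) := by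
    have hm' : (⌊y⌋ : ℝ) - ⌊x⌋ = k * m := by exact_mod_cast hm
    linear_combination (Int.floor_add_fract y).symm - (Int.floor_add_fract x).symm + hm' + hy - hx
  have hjd : (j : ℝ) * d ≤ k * d := mul_le_mul_of_nonneg_right (by exact_mod_cast hjk) hd
  rw [Int.fract_eq_iff]
  refine ⟨by linarith [Int.fract_nonneg x, mul_nonneg (Nat.cast_nonneg j) hd],
    by linarith [Int.fract_lt_one y], ⌊x⌋ + j * m, ?_⟩
  rw [hyx]
  field_simp
  push_cast
  linear_combination hx - Int.floor_add_fract x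

theorem sum_range_ite_abs_sub_lt {a d ε t : ℝ} (hεd : ε ≤ d / 2) (k : ℕ) :
    ∑ i ∈ Finset.range (k + 1), (if |t - (a + i * d)| < ε then 1 else 0 : ℤ) =
      if ∃ i ≤ k, |t - (a + i * d)| < ε then 1 else 0 := by
  have hsep : ∀ i j : ℕ, i < j → |t - (a + i * d)| < ε → ¬ |t - (a + j * d)| < ε := by
    intro i j hij hi hj
    have hij' : (i : ℝ) + 1 ≤ j := by exact_mod_cast hij
    have hε : 0 < ε := (abs_nonneg _).trans_lt hi
    obtain ⟨-, hi⟩ := abs_lt.1 hi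
    obtain ⟨hj, -⟩ := abs_lt.1 hj
    nlinarith [mul_le_mul_of_nonneg_right hij' (by linarith : (0 : ℝ) ≤ d)]
  have hcard : #((Finset.range (k + 1)).filter fun i : ℕ => |t - (a + i * d)| < ε) ≤ 1 := by
    refine Finset.card_le_one.2 fun i hi j hj => ?_
    simp only [Finset.mem_filter] at hi hj
    rcases lt_trichotomy i j with h | rfl | h
    · exact (hsep i j h hi.2 hj.2).elim
    · rfl
    · exact (hsep j i h hj.2 hi.2).elim
  rw [Finset.sum_boole]
  split_ifs with h
  · obtain ⟨i, hik, hi⟩ := h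
    have hpos : 0 < #((Finset.range (k + 1)).filter fun i : ℕ => |t - (a + i * d)| < ε) :=
      Finset.card_pos.2 ⟨i, Finset.mem_filter.2 ⟨Finset.mem_range.2 (by omega), hi⟩⟩
    omega
  · push Not at h
    rw [Finset.card_eq_zero.2 (Finset.filter_eq_empty_iff.2 fun i hi =>
      (h i (Nat.lt_succ_iff.1 (Finset.mem_range.1 hi))).not_gt)]
    rfl

theorem mem_convexHull_trapezoid_iff {ℓ₁ r₁ ℓ₂ r₂ y₁ y₂ : ℝ} (h₁ : ℓ₁ ≤ r₁) (h₂ : ℓ₂ ≤ r₂)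
    (x y : ℝ) :
    (x, y) ∈ convexHull ℝ {(ℓ₁, y₁), (r₁, y₁), (ℓ₂, y₂), (r₂, y₂)} ↔
      ∃ s ∈ Icc (0 : ℝ) 1, y = y₁ + s * (y₂ - y₁) ∧
        x ∈ Icc (ℓ₁ + s * (ℓ₂ - ℓ₁)) (r₁ + s * (r₂ - r₁)) := by
  simp only [← convexJoin_segments, mem_convexJoin, segment_eq_image', mem_image]
  constructor
  · rintro ⟨_, ⟨u, ⟨hu₀, hu₁⟩, rfl⟩, _, ⟨v, ⟨hv₀, hv₁⟩, rfl⟩, s, ⟨hs₀, hs₁⟩, hxy⟩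
    simp only [Prod.ext_iff, Prod.fst_add, Prod.snd_add, Prod.fst_sub, Prod.snd_sub, Prod.smul_fst,
      Prod.smul_snd, smul_eq_mul] at hxy
    obtain ⟨rfl, rfl⟩ := hxy
    have hu := mul_nonneg (mul_nonneg (sub_nonneg.2 hs₁) hu₀) (sub_nonneg.2 h₁)
    have hu' := mul_nonneg (mul_nonneg (sub_nonneg.2 hs₁) (sub_nonneg.2 hu₁)) (sub_nonneg.2 h₁)
    have hv := mul_nonneg (mul_nonneg hs₀ hv₀) (sub_nonneg.2 h₂)
    have hv' := mul_nonneg (mul_nonneg hs₀ (sub_nonneg.2 hv₁)) (sub_nonneg.2 h₂)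
    exact ⟨s, ⟨hs₀, hs₁⟩, by ring, by linarith, by linarith⟩
  · rintro ⟨s, ⟨hs₀, hs₁⟩, rfl, hx⟩
    have hLR : ℓ₁ + s * (ℓ₂ - ℓ₁) ≤ r₁ + s * (r₂ - r₁) := by
      linarith [mul_nonneg (sub_nonneg.2 hs₁) (sub_nonneg.2 h₁), mul_nonneg hs₀ (sub_nonneg.2 h₂)]
    rw [← segment_eq_Icc hLR, segment_eq_image'] at hx
    obtain ⟨τ, hτ, rfl⟩ := hx
    refine ⟨_, ⟨τ, hτ, rfl⟩, _, ⟨τ, hτ, rfl⟩, s, ⟨hs₀, hs₁⟩, ?_⟩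
    ext <;> simp only [Prod.fst_add, Prod.snd_add, Prod.fst_sub, Prod.snd_sub, Prod.smul_fst,
      Prod.smul_snd, smul_eq_mul] <;> ring

theorem mem_convexHull_trapezoid_row_iff {ℓ₁ r₁ ℓ₂ r₂ : ℝ} {y₁ y₂ : ℤ} {j k : ℕ}
    (h₁ : ℓ₁ ≤ r₁) (h₂ : ℓ₂ ≤ r₂) (hk : 0 < k) (hy : y₂ - y₁ = k) (hjk : j ≤ k) (x : ℝ) :
    (x, ((y₁ + j : ℤ) : ℝ)) ∈
        convexHull ℝ {(ℓ₁, (y₁ : ℝ)), (r₁, (y₁ : ℝ)), (ℓ₂, (y₂ : ℝ)), (r₂, (y₂ : ℝ))} ↔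
      x ∈ Icc (ℓ₁ + j / k * (ℓ₂ - ℓ₁)) (r₁ + j / k * (r₂ - r₁)) := by
  have hk0 : (k : ℝ) ≠ 0 := by positivity
  have hyR : (y₂ : ℝ) - y₁ = k := by exact_mod_cast hy
  rw [mem_convexHull_trapezoid_iff h₁ h₂, hyR]
  refine ⟨fun ⟨s, _, hs, hx⟩ => ?_, fun hx => ⟨j / k, ⟨by positivity, ?_⟩, ?_, hx⟩⟩
  · obtain rfl : s = j / k := by
      rw [eq_div_iff hk0]; push_cast at hs; linarith
    exact hx
  · exact div_le_one_of_le₀ (by exact_mod_cast hjk) (by positivity)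
  · push_cast; field_simp

theorem snd_mem_Icc_of_mem_convexHull_trapezoid {ℓ₁ r₁ ℓ₂ r₂ y₁ y₂ x y : ℝ} (h₁ : ℓ₁ ≤ r₁)
    (h₂ : ℓ₂ ≤ r₂) (hy : y₁ ≤ y₂)
    (hxy : (x, y) ∈ convexHull ℝ {(ℓ₁, y₁), (r₁, y₁), (ℓ₂, y₂), (r₂, y₂)}) : y ∈ Icc y₁ y₂ := by
  obtain ⟨s, ⟨hs₀, hs₁⟩, rfl, -⟩ := (mem_convexHull_trapezoid_iff h₁ h₂ x y).1 hxy
  constructor <;> nlinarith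

theorem ncard_trapezoid_int_points_eq_sum_rows {ℓ₁ r₁ ℓ₂ r₂ : ℝ} {y₁ y₂ : ℤ} {k : ℕ}
    (h₁ : ℓ₁ ≤ r₁) (h₂ : ℓ₂ ≤ r₂) (hk : 0 < k) (hy : y₂ - y₁ = k) (t : ℝ) :
    {p : ℤ × ℤ | ((p.1 : ℝ) + t, (p.2 : ℝ)) ∈
        convexHull ℝ {(ℓ₁, (y₁ : ℝ)), (r₁, (y₁ : ℝ)), (ℓ₂, (y₂ : ℝ)), (r₂, (y₂ : ℝ))}}.ncard =
      ∑ j ∈ Finset.range (k + 1),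
        {n : ℤ | (n : ℝ) + t ∈ Icc (ℓ₁ + j / k * (ℓ₂ - ℓ₁)) (r₁ + j / k * (r₂ - r₁))}.ncard := by
  set T : Finset ℤ :=
    (Finset.range (k + 1)).map ⟨fun j : ℕ => y₁ + j, fun i j h => by simpa using h⟩
  have hrow : ∀ j ∈ Finset.range (k + 1),
      {n : ℤ | ((n : ℝ) + t, ((y₁ + j : ℤ) : ℝ)) ∈
        convexHull ℝ {(ℓ₁, (y₁ : ℝ)), (r₁, (y₁ : ℝ)), (ℓ₂, (y₂ : ℝ)), (r₂, (y₂ : ℝ))}} =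
      {n : ℤ | (n : ℝ) + t ∈ Icc (ℓ₁ + j / k * (ℓ₂ - ℓ₁)) (r₁ + j / k * (r₂ - r₁))} :=
    fun j hj => Set.ext fun n =>
      mem_convexHull_trapezoid_row_iff h₁ h₂ hk hy (Finset.mem_range_succ_iff.1 hj) _
  have hT : ∀ p ∈ {p : ℤ × ℤ | ((p.1 : ℝ) + t, (p.2 : ℝ)) ∈
      convexHull ℝ {(ℓ₁, (y₁ : ℝ)), (r₁, (y₁ : ℝ)), (ℓ₂, (y₂ : ℝ)), (r₂, (y₂ : ℝ))}}, p.2 ∈ T := by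
    rintro ⟨n, q⟩ hp
    have hy₁₂ : (y₁ : ℝ) ≤ y₂ := by exact_mod_cast (by omega : y₁ ≤ y₂)
    obtain ⟨hq₀, hq₁⟩ := snd_mem_Icc_of_mem_convexHull_trapezoid h₁ h₂ hy₁₂ hp
    have hq₀ : y₁ ≤ q := by exact_mod_cast hq₀
    have hq₁ : q ≤ y₂ := by exact_mod_cast hq₁
    simp only [T, Finset.mem_map, Finset.mem_range]
    exact ⟨(q - y₁).toNat, by omega, show y₁ + _ = q by omega⟩
  rw [Set.ncard_eq_sum_ncard_fiber T hT, Finset.sum_map]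
  · exact Finset.sum_congr rfl fun j hj => congrArg ncard (hrow j hj)
  · simp only [T, Finset.forall_mem_map]
    intro j hj
    refine (congrArg Set.Finite (hrow j hj)).mpr ?_
    rw [setOf_int_add_mem_Icc]
    exact Finset.finite_toSet _

theorem stmt2_general (a d ε ℓ₁ r₁ ℓ₂ r₂ : ℝ) (y₁ y₂ : ℤ) (k : ℕ)
    (hk : 1 ≤ k) (hy : y₂ - y₁ = (k : ℤ))
    (hε : 0 < ε) (hεd : ε ≤ d / 2)
    (hl1 : ℓ₁ < r₁) (hl2 : ℓ₂ < r₂)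
    (hf1 : Int.fract ℓ₁ = a + ε) (hf2 : Int.fract ℓ₂ = a + k * d + ε)
    (hf3 : Int.fract r₁ = a - ε) (hf4 : Int.fract r₂ = a + k * d - ε)
    (hdiv1 : (k : ℤ) ∣ ⌊ℓ₂⌋ - ⌊ℓ₁⌋) (hdiv2 : (k : ℤ) ∣ ⌊r₂⌋ - ⌊r₁⌋) :
    ∃ M : ℕ, ∀ t ∈ Set.Icc (0:ℝ) 1,
      {p : ℤ × ℤ | ((p.1 : ℝ) + t, (p.2 : ℝ)) ∈
          convexHull ℝ {(ℓ₁, (y₁ : ℝ)), (r₁, (y₁ : ℝ)), (ℓ₂, (y₂ : ℝ)), (r₂, (y₂ : ℝ))}}.ncard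
        = M + (if ∃ i ≤ k, |t - (a + i * d)| < ε then 0 else 1) := by
  have hd : 0 ≤ d := by linarith
  set L : ℕ → ℝ := fun j => ℓ₁ + j / k * (ℓ₂ - ℓ₁)
  set R : ℕ → ℝ := fun j => r₁ + j / k * (r₂ - r₁)
  have hLR : ∀ j ≤ k, L j ≤ R j := fun j hj => by
    have hs₁ : (j / k : ℝ) ≤ 1 := div_le_one_of_le₀ (by exact_mod_cast hj) (by positivity)
    have hs₀ : (0 : ℝ) ≤ j / k := by positivity
    linarith [mul_nonneg (sub_nonneg.2 hs₁) (sub_pos.2 hl1).le, mul_nonneg hs₀ (sub_pos.2 hl2).le]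
  have hfractL : ∀ j ≤ k, Int.fract (L j) = a + j * d + ε := fun j hj =>
    (fract_add_div_mul_sub_of_dvd hf1 (by rw [hf2]; ring) hdiv1 hj hd).trans (by ring)
  have hfractR : ∀ j ≤ k, Int.fract (R j) = a + j * d - ε := fun j hj =>
    (fract_add_div_mul_sub_of_dvd hf3 (by rw [hf4]; ring) hdiv2 hj hd).trans (by ring)
  set W : ℤ := ∑ j ∈ Finset.range (k + 1), (⌊R j⌋ - ⌊L j⌋)
  have hW : 0 < W := Finset.sum_pos (fun j hj => by
    have hjk := Finset.mem_range_succ_iff.1 hj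
    exact sub_pos.2 (Int.floor_lt_floor_of_le_of_fract_lt (hLR j hjk)
      (by rw [hfractL j hjk, hfractR j hjk]; linarith))) Finset.nonempty_range_add_one
  refine ⟨(W - 1).toNat, fun t ht => ?_⟩
  have hcount : ({p : ℤ × ℤ | ((p.1 : ℝ) + t, (p.2 : ℝ)) ∈
      convexHull ℝ {(ℓ₁, (y₁ : ℝ)), (r₁, (y₁ : ℝ)), (ℓ₂, (y₂ : ℝ)), (r₂, (y₂ : ℝ))}}.ncard : ℤ) =
      W - ∑ j ∈ Finset.range (k + 1), if |t - (a + j * d)| < ε then 1 else 0 := by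
    rw [ncard_trapezoid_int_points_eq_sum_rows hl1.le hl2.le hk hy, Nat.cast_sum,
      ← Finset.sum_sub_distrib]
    refine Finset.sum_congr rfl fun j hj => ?_
    have hjk := Finset.mem_range_succ_iff.1 hj
    exact ncard_int_add_mem_Icc hε (hfractL j hjk) (hfractR j hjk) (hLR j hjk) ht
  rw [sum_range_ite_abs_sub_lt hεd] at hcount
  split_ifs at hcount ⊢ <;> omega

theorem stmt2 (a d ε ℓ₁ r₁ ℓ₂ r₂ : ℝ) (y₁ y₂ : ℤ) (k : ℕ)
    (hk : 1 ≤ k) (hy : y₂ - y₁ = (k : ℤ))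
    (hε : 0 < ε) (hεd : ε ≤ d / 2)
    (h1 : 0 < a - ε) (h2 : a + k * d + ε < 1)
    (hl1 : ℓ₁ < r₁) (hl2 : ℓ₂ < r₂)
    (hf1 : Int.fract ℓ₁ = a + ε) (hf2 : Int.fract ℓ₂ = a + k * d + ε)
    (hf3 : Int.fract r₁ = a - ε) (hf4 : Int.fract r₂ = a + k * d - ε)
    (hdiv1 : (k : ℤ) ∣ ⌊ℓ₂⌋ - ⌊ℓ₁⌋) (hdiv2 : (k : ℤ) ∣ ⌊r₂⌋ - ⌊r₁⌋) :
    ∃ M : ℕ, ∀ t ∈ Set.Icc (0:ℝ) 1,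
      {p : ℤ × ℤ | ((p.1 : ℝ) + t, (p.2 : ℝ)) ∈
          convexHull ℝ {(ℓ₁, (y₁ : ℝ)), (r₁, (y₁ : ℝ)), (ℓ₂, (y₂ : ℝ)), (r₂, (y₂ : ℝ))}}.ncard
        = M + (if ∃ i ≤ k, |t - (a + i * d)| < ε then 0 else 1) :=
  stmt2_general a d ε ℓ₁ r₁ ℓ₂ r₂ y₁ y₂ k hk hy hε hεd hl1 hl2 hf1 hf2 hf3 hf4 hdiv1 hdiv2
end

section
/- Let b₁, b₂ be a reduced basis of a lattice in ℝ² (‖b₁‖ ≤ ‖b₂‖, Gram–Schmidt coefficient |μ| ≤ 1/2). Let y ∈ ℝ² satisfy b₁ᵀy = 1 and b₂ᵀy = 0. Then ‖y‖² ≤ (4/3)·(1/‖b₁‖²). -/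
/-!
Since `b₂* ⊥ b₁` are nonzero in the plane, Parseval's identity gives
`‖y‖² = ⟪b₁, y⟫² / ‖b₁‖² + ⟪b₂*, y⟫² / ‖b₂*‖² = 1 / ‖b₁‖² + μ² / ‖b₂*‖²`, using `⟪b₂*, y⟫ = -μ`.
Reducedness gives `‖b₁‖² ≤ ‖b₂‖² = ‖b₂*‖² + μ² ‖b₁‖²` with `μ² ≤ 1/4`, so `‖b₂*‖² ≥ (3/4) ‖b₁‖²`
and the second term is at most `(1/3) / ‖b₁‖²`.
-/

theorem sum_norm_inner_sq_div_eq_norm_sq_of_orthogonal {𝕜 E ι : Type*} [RCLike 𝕜]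
    [NormedAddCommGroup E] [InnerProductSpace 𝕜 E] [FiniteDimensional 𝕜 E] [Fintype ι]
    {f : ι → E} (hf : ∀ i, f i ≠ 0) (horth : Pairwise fun i j => inner 𝕜 (f i) (f j) = 0)
    (hcard : Fintype.card ι = Module.finrank 𝕜 E) (x : E) :
    ∑ i, ‖inner 𝕜 (f i) x‖ ^ 2 / ‖f i‖ ^ 2 = ‖x‖ ^ 2 := by
  set g : ι → E := fun i => ((‖f i‖⁻¹ : ℝ) : 𝕜) • f i
  have hg : Orthonormal 𝕜 g := by
    refine ⟨fun i => ?_, fun i j hij => ?_⟩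
    · simp [g, norm_smul, hf i]
    · simp [g, inner_smul_left, inner_smul_right, horth hij]
  have hspan := hg.linearIndependent.span_eq_top_of_card_eq_finrank' hcard
  rw [← (OrthonormalBasis.mk hg hspan.ge).sum_sq_norm_inner_right x]
  refine Finset.sum_congr rfl fun i _ => ?_
  simp [g, inner_smul_left, mul_pow, div_eq_inv_mul]

theorem norm_sq_eq_of_orthogonal_of_finrank_eq_two {E : Type*} [NormedAddCommGroup E]
    [InnerProductSpace ℝ E] [FiniteDimensional ℝ E] (hE : Module.finrank ℝ E = 2) {u v : E}
    (hu : u ≠ 0) (hv : v ≠ 0) (huv : inner ℝ u v = (0 : ℝ)) (x : E) :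
    ‖x‖ ^ 2 = inner ℝ u x ^ 2 / ‖u‖ ^ 2 + inner ℝ v x ^ 2 / ‖v‖ ^ 2 := by
  have horth : Pairwise fun i j => inner ℝ (![u, v] i) (![u, v] j) = (0 : ℝ) := by
    intro i j hij
    fin_cases i <;> fin_cases j <;> simp_all [real_inner_comm]
  have hparseval := sum_norm_inner_sq_div_eq_norm_sq_of_orthogonal (f := ![u, v])
    (by simp [Fin.forall_fin_two, hu, hv]) horth (by simp [hE]) x
  simpa [Fin.sum_univ_two, sq_abs] using hparseval.symm

theorem three_fourths_norm_sq_le_norm_sq_of_reduced {E : Type*} [NormedAddCommGroup E]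
    [InnerProductSpace ℝ E] {b₁ b₂s : E} {μ : ℝ} (hle : ‖b₁‖ ≤ ‖b₂s + μ • b₁‖)
    (horth : inner ℝ b₂s b₁ = (0 : ℝ)) (hμ : |μ| ≤ 1 / 2) :
    3 / 4 * ‖b₁‖ ^ 2 ≤ ‖b₂s‖ ^ 2 := by
  have hpyth : ‖b₂s + μ • b₁‖ ^ 2 = ‖b₂s‖ ^ 2 + μ ^ 2 * ‖b₁‖ ^ 2 := by
    rw [sq, norm_add_sq_eq_norm_sq_add_norm_sq_real (by simp [real_inner_smul_right, horth]),
      norm_smul, Real.norm_eq_abs, ← sq_abs μ]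
    ring
  have hμsq : μ ^ 2 ≤ (1 / 2) ^ 2 := sq_le_sq' (abs_le.mp hμ).1 (abs_le.mp hμ).2
  calc 3 / 4 * ‖b₁‖ ^ 2 = ‖b₁‖ ^ 2 - (1 / 2) ^ 2 * ‖b₁‖ ^ 2 := by ring
    _ ≤ ‖b₂s + μ • b₁‖ ^ 2 - μ ^ 2 * ‖b₁‖ ^ 2 :=
      sub_le_sub (pow_le_pow_left₀ (norm_nonneg b₁) hle 2)
        (mul_le_mul_of_nonneg_right hμsq (sq_nonneg _))
    _ = ‖b₂s‖ ^ 2 := by rw [hpyth]; ring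

theorem stmt10_general (b₁ b₂ b₂s : EuclideanSpace ℝ (Fin 2)) (μ : ℝ)
    (hle : ‖b₁‖ ≤ ‖b₂‖) (hdecomp : b₂ = b₂s + μ • b₁)
    (horth : (inner ℝ b₂s b₁ : ℝ) = 0) (hμ : |μ| ≤ 1 / 2)
    (y : EuclideanSpace ℝ (Fin 2))
    (hy1 : (inner ℝ b₁ y : ℝ) = 1) (hy2 : (inner ℝ b₂ y : ℝ) = 0) :
    ‖y‖ ^ 2 ≤ (4 / 3) * (1 / ‖b₁‖ ^ 2) := by
  subst hdecomp
  have hb₁ : b₁ ≠ 0 := by rintro rfl; simp at hy1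
  have hgs := three_fourths_norm_sq_le_norm_sq_of_reduced hle horth hμ
  have hb₂s : b₂s ≠ 0 := by
    have : 0 < ‖b₁‖ ^ 2 := by positivity
    rintro rfl
    simp at hgs
    linarith
  have hy₂s : inner ℝ b₂s y = -μ := by
    rw [inner_add_left, real_inner_smul_left, hy1] at hy2
    linarith
  have hμsq : μ ^ 2 ≤ (1 / 2) ^ 2 := sq_le_sq' (abs_le.mp hμ).1 (abs_le.mp hμ).2
  rw [norm_sq_eq_of_orthogonal_of_finrank_eq_two finrank_euclideanSpace_fin hb₁ hb₂s
    (by rwa [real_inner_comm]) y, hy1, hy₂s, one_pow, neg_sq]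
  calc 1 / ‖b₁‖ ^ 2 + μ ^ 2 / ‖b₂s‖ ^ 2
      ≤ 1 / ‖b₁‖ ^ 2 + (1 / 2) ^ 2 / (3 / 4 * ‖b₁‖ ^ 2) := by gcongr
    _ = 4 / 3 * (1 / ‖b₁‖ ^ 2) := by field_simp; ring

theorem stmt10 (b₁ b₂ b₂s : EuclideanSpace ℝ (Fin 2)) (μ : ℝ) (hb₁ : b₁ ≠ 0)
    (hle : ‖b₁‖ ≤ ‖b₂‖) (hdecomp : b₂ = b₂s + μ • b₁)
    (horth : (inner ℝ b₂s b₁ : ℝ) = 0) (hμ : |μ| ≤ 1 / 2)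
    (y : EuclideanSpace ℝ (Fin 2))
    (hy1 : (inner ℝ b₁ y : ℝ) = 1) (hy2 : (inner ℝ b₂ y : ℝ) = 0) :
    ‖y‖ ^ 2 ≤ (4 / 3) * (1 / ‖b₁‖ ^ 2) :=
  stmt10_general b₁ b₂ b₂s μ hle hdecomp horth hμ y hy1 hy2
end

section
/- Let b₁, b₂ be a reduced basis of the dual lattice Λ* of a two-dimensional lattice Λ ⊂ ℝ² (‖b₁‖ ≤ ‖b₂‖ and Gram–Schmidt coefficient |μ| ≤ 1/2), and let P = {x ∈ ℝ² : 0 ≤ b₁ᵀx < 1 and 0 ≤ b₂ᵀx < 1} be the associated fundamental parallelepiped of Λ. Then the diameter of P is at most 2.4/‖b₁‖. -/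
/-!
Write `b₂ = b₂s + μ • b₁` with `b₂s ⟂ b₁`. Reducedness gives `‖b₂s‖² ≥ 3/4 ‖b₁‖²`. The difference
`d` of two points of the parallelepiped satisfies `|⟪b₁, d⟫| ≤ 1` and `|⟪b₂, d⟫| ≤ 1`, hence
`|⟪b₂s, d⟫| ≤ 3/2`, and expanding `d` in the orthogonal basis `b₁, b₂s` of the plane gives
`‖d‖² ≤ 1/‖b₁‖² + (9/4)/(3/4 ‖b₁‖²) = (2/‖b₁‖)²`.
-/

open Module RealInnerProductSpace

theorem norm_sq_eq_inner_sq_div_add_inner_sq_div {E : Type*} [NormedAddCommGroup E]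
    [InnerProductSpace ℝ E] [FiniteDimensional ℝ E] (hE : finrank ℝ E = 2) {u v : E}
    (hu : u ≠ 0) (hv : v ≠ 0) (huv : ⟪u, v⟫ = 0) (d : E) :
    ‖d‖ ^ 2 = ⟪u, d⟫ ^ 2 / ‖u‖ ^ 2 + ⟪v, d⟫ ^ 2 / ‖v‖ ^ 2 := by
  have hli : LinearIndependent ℝ ![u, v] :=
    linearIndependent_of_ne_zero_of_inner_eq_zero (by simp [Fin.forall_fin_two, hu, hv])
      (by intro i j hij; fin_cases i <;> fin_cases j <;> simp_all [real_inner_comm u v])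
  have hspan : Submodule.span ℝ {u, v} = ⊤ := by
    simpa [Matrix.range_cons, Matrix.range_empty, Set.union_singleton, Set.pair_comm] using
      hli.span_eq_top_of_card_eq_finrank' (by simp [hE])
  obtain ⟨a, b, rfl⟩ := Submodule.mem_span_pair.mp (hspan ▸ Submodule.mem_top (x := d))
  have hvu : ⟪v, u⟫ = 0 := by rw [real_inner_comm]; exact huv
  have hu2 : ‖u‖ ^ 2 ≠ 0 := by positivity
  have hv2 : ‖v‖ ^ 2 ≠ 0 := by positivity
  rw [norm_add_sq_real, inner_add_right, inner_add_right]
  simp only [real_inner_smul_left, real_inner_smul_right, real_inner_self_eq_norm_sq, huv, hvu,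
    norm_smul, mul_pow, Real.norm_eq_abs, sq_abs]
  field_simp
  ring

section ReducedBasis

variable {E : Type*} [NormedAddCommGroup E] [InnerProductSpace ℝ E] {b₁ b₂ b₂s : E} {μ : ℝ}

theorem three_div_four_mul_norm_sq_le_norm_sq_gramSchmidt (hle : ‖b₁‖ ≤ ‖b₂‖)
    (hdecomp : b₂ = b₂s + μ • b₁) (horth : ⟪b₂s, b₁⟫ = 0) (hμ : |μ| ≤ 1 / 2) :
    3 / 4 * ‖b₁‖ ^ 2 ≤ ‖b₂s‖ ^ 2 := by
  have hb₂ : ‖b₂‖ ^ 2 = ‖b₂s‖ ^ 2 + μ ^ 2 * ‖b₁‖ ^ 2 := by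
    rw [hdecomp, norm_add_sq_real, real_inner_smul_right, horth, norm_smul, Real.norm_eq_abs,
      mul_pow, sq_abs]
    ring
  have hμ2 : μ ^ 2 ≤ 1 / 4 := by nlinarith [sq_abs μ, abs_nonneg μ]
  nlinarith [norm_nonneg b₁, norm_nonneg b₂, sq_nonneg ‖b₁‖]

theorem abs_inner_gramSchmidt_le (hdecomp : b₂ = b₂s + μ • b₁) (hμ : |μ| ≤ 1 / 2) {d : E}
    (h₁ : |⟪b₁, d⟫| ≤ 1) (h₂ : |⟪b₂, d⟫| ≤ 1) : |⟪b₂s, d⟫| ≤ 3 / 2 := by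
  have h : ⟪b₂s, d⟫ = ⟪b₂, d⟫ - μ * ⟪b₁, d⟫ := by
    rw [hdecomp, inner_add_left, real_inner_smul_left]; ring
  calc |⟪b₂s, d⟫| ≤ |⟪b₂, d⟫| + |μ| * |⟪b₁, d⟫| := by rw [h, ← abs_mul]; exact abs_sub _ _
    _ ≤ 1 + 1 / 2 * 1 := by gcongr
    _ = 3 / 2 := by norm_num

theorem norm_le_two_div_norm_of_abs_inner_le_one [FiniteDimensional ℝ E] (hE : finrank ℝ E = 2)
    (hb₁ : b₁ ≠ 0) (hle : ‖b₁‖ ≤ ‖b₂‖) (hdecomp : b₂ = b₂s + μ • b₁) (horth : ⟪b₂s, b₁⟫ = 0)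
    (hμ : |μ| ≤ 1 / 2) {d : E} (h₁ : |⟪b₁, d⟫| ≤ 1) (h₂ : |⟪b₂, d⟫| ≤ 1) :
    ‖d‖ ≤ 2 / ‖b₁‖ := by
  have hb₁pos : 0 < ‖b₁‖ ^ 2 := by positivity
  have hb₂s := three_div_four_mul_norm_sq_le_norm_sq_gramSchmidt hle hdecomp horth hμ
  have hb₂spos : 0 < ‖b₂s‖ ^ 2 := by linarith
  have hb₂s0 : b₂s ≠ 0 := by rintro rfl; simp at hb₂spos
  have hterm₁ : ⟪b₁, d⟫ ^ 2 / ‖b₁‖ ^ 2 ≤ 1 / ‖b₁‖ ^ 2 := by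
    gcongr; exact (sq_le_one_iff_abs_le_one _).mpr h₁
  have hterm₂ : ⟪b₂s, d⟫ ^ 2 / ‖b₂s‖ ^ 2 ≤ 3 / ‖b₁‖ ^ 2 := by
    have h := abs_inner_gramSchmidt_le hdecomp hμ h₁ h₂
    have hsq : ⟪b₂s, d⟫ ^ 2 ≤ 9 / 4 := by nlinarith [sq_abs ⟪b₂s, d⟫, abs_nonneg ⟪b₂s, d⟫]
    rw [div_le_div_iff₀ hb₂spos hb₁pos]
    nlinarith
  refine le_of_pow_le_pow_left₀ two_ne_zero (by positivity) ?_
  calc ‖d‖ ^ 2 = ⟪b₁, d⟫ ^ 2 / ‖b₁‖ ^ 2 + ⟪b₂s, d⟫ ^ 2 / ‖b₂s‖ ^ 2 :=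
        norm_sq_eq_inner_sq_div_add_inner_sq_div hE hb₁ hb₂s0
          (by rw [real_inner_comm]; exact horth) d
    _ ≤ 1 / ‖b₁‖ ^ 2 + 3 / ‖b₁‖ ^ 2 := add_le_add hterm₁ hterm₂
    _ = (2 / ‖b₁‖) ^ 2 := by ring

end ReducedBasis

theorem stmt11 (b₁ b₂ b₂s : EuclideanSpace ℝ (Fin 2)) (μ : ℝ)
    (hind : LinearIndependent ℝ ![b₁, b₂])
    (hle : ‖b₁‖ ≤ ‖b₂‖) (hdecomp : b₂ = b₂s + μ • b₁)
    (horth : (inner ℝ b₂s b₁ : ℝ) = 0) (hμ : |μ| ≤ 1 / 2) :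
    Metric.diam {x : EuclideanSpace ℝ (Fin 2) |
        0 ≤ (inner ℝ b₁ x : ℝ) ∧ (inner ℝ b₁ x : ℝ) < 1 ∧
        0 ≤ (inner ℝ b₂ x : ℝ) ∧ (inner ℝ b₂ x : ℝ) < 1}
      ≤ 2.4 / ‖b₁‖ := by
  have hb₁ : b₁ ≠ 0 := by simpa using hind.ne_zero 0
  have h2 : 2 / ‖b₁‖ ≤ 2.4 / ‖b₁‖ := by gcongr; norm_num
  refine (Metric.diam_le_of_forall_dist_le (by positivity) ?_).trans h2
  rintro x ⟨hx₁, hx₁', hx₂, hx₂'⟩ y ⟨hy₁, hy₁', hy₂, hy₂'⟩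
  rw [dist_eq_norm]
  refine norm_le_two_div_norm_of_abs_inner_le_one (by simp) hb₁ hle hdecomp horth hμ ?_ ?_
  · rw [inner_sub_right]; exact (abs_sub_lt_of_nonneg_of_lt hx₁ hx₁' hy₁ hy₁').le
  · rw [inner_sub_right]; exact (abs_sub_lt_of_nonneg_of_lt hx₂ hx₂' hy₂ hy₂').le
end
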